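/- The sequences u_n and v_n grow with exponential rate ((1+√5)/2)^5, that is, lim_{n→∞} u_n^{1/n} = lim_{n→∞} v_n^{1/n} = ((1+√5)/2)^5. -/

import Mathlib

open Filter Topology

noncomputable section

/-- `p(x) = 20x² - 8x + 1`. -/
def pp (x : ℚ) : ℚ := 20*x^2 - 8*x + 1

/-- `q(x) = 3520x⁶ + 5632x⁵ + 2064x⁴ - 384x³ - 156x² + 16x + 7`. -/
def qq (x : ℚ) : ℚ := 3520*x^6 + 5632*x^5 + 2064*x^4 - 384*x^3 - 156*x^2 + 16*x + 7

/-- The sequence `u`: `u₀ = 1`, `u₁ = 7/4`, and for `n ≥ 1`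
`(2n+1)²(2n+2)² p(n) u_{n+1} - q(n) u_n - (2n-1)²(2n)² p(n+1) u_{n-1} = 0`
(written here solving for `u_{n+2}` at index `n+1 ≥ 1`). -/
def uSeq : ℕ → ℚ
  | 0 => 1
  | 1 => 7/4
  | n + 2 =>
      (qq ((n : ℚ) + 1) * uSeq (n + 1)
          + (2*(n : ℚ)+1)^2 * (2*(n : ℚ)+2)^2 * pp ((n : ℚ) + 2) * uSeq n)
        / ((2*(n : ℚ)+3)^2 * (2*(n : ℚ)+4)^2 * pp ((n : ℚ) + 1))

/-- The sequence `v`: `v₀ = 0`, `v₁ = 13/8`, same recurrence as `u`. -/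
def vSeq : ℕ → ℚ
  | 0 => 0
  | 1 => 13/8
  | n + 2 =>
      (qq ((n : ℚ) + 1) * vSeq (n + 1)
          + (2*(n : ℚ)+1)^2 * (2*(n : ℚ)+2)^2 * pp ((n : ℚ) + 2) * vSeq n)
        / ((2*(n : ℚ)+3)^2 * (2*(n : ℚ)+4)^2 * pp ((n : ℚ) + 1))

/-- `D n = lcm(1, 2, …, n)` (equal to `1` for `n = 0`). -/
def D (n : ℕ) : ℕ := (Finset.Icc 1 n).lcm id

/-- Catalan's constant `G = Σ_{l≥0} (-1)^l / (2l+1)²`. -/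
def G : ℝ := ∑' l : ℕ, (-1)^l / (2*(l : ℝ)+1)^2

/-!
If `w` solves the recurrence and is positive from `n = 1` on, its ratios `xₙ = wₙ₊₁ / wₙ`
satisfy `xₙ₊₁ = aₙ + bₙ / xₙ` with `aₙ → 11` and `bₙ → 1`. The positive fixed point of
`x ↦ 11 + 1 / x` is `L = φ⁵` (indeed `L² = 11 L + 1`). Once `xₙ ≥ L / 2`, each step shrinks
`|xₙ - L|` by the factor `2 / L² < 1` up to errors tending to `0`, so `xₙ → L`; a Cesàro
average of `log wₙ₊₁ - log wₙ` turns this into `wₙ^(1/n) → L`.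
-/

open Real

theorem pos_of_add_two_eq {K : Type*} [Semiring K] [PartialOrder K] [IsStrictOrderedRing K]
    {w a b : ℕ → K} (ha : ∀ n, 0 < a n) (hb : ∀ n, 0 ≤ b n)
    (hw : ∀ n, w (n + 2) = a n * w (n + 1) + b n * w n) (h0 : 0 ≤ w 0) (h1 : 0 < w 1) (n : ℕ) :
    0 < w (n + 1) := by
  suffices h : ∀ n, 0 ≤ w n ∧ 0 < w (n + 1) from (h n).2
  intro n
  induction n with
  | zero => exact ⟨h0, h1⟩
  | succ n ih =>
    refine ⟨ih.2.le, ?_⟩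
    rw [hw]
    exact add_pos_of_pos_of_nonneg (mul_pos (ha n) ih.2) (mul_nonneg (hb n) ih.1)

theorem tendsto_zero_of_le_add_mul {e δ : ℕ → ℝ} {r : ℝ} (hr0 : 0 ≤ r) (hr1 : r < 1)
    (he : ∀ n, 0 ≤ e n) (hδ : Tendsto δ atTop (𝓝 0))
    (hrec : ∀ᶠ n in atTop, e (n + 1) ≤ δ n + r * e n) : Tendsto e atTop (𝓝 0) := by
  refine tendsto_order.2 ⟨fun c hc => .of_forall fun n => hc.trans_le (he n), fun ε hε => ?_⟩
  obtain ⟨N, hN⟩ := ((hδ.eventually (ge_mem_nhds (by nlinarith : 0 < (1 - r) * ε / 2))).and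
    hrec).exists_forall_of_atTop
  have hbound : ∀ k, e (k + N) ≤ ε / 2 + r ^ k * e N := by
    intro k
    induction k with
    | zero =>
      simp only [zero_add, pow_zero, one_mul]
      linarith
    | succ k ih =>
      obtain ⟨hδk, hk⟩ := hN (k + N) (by omega)
      calc e (k + 1 + N) = e (k + N + 1) := by rw [Nat.add_right_comm]
        _ ≤ δ (k + N) + r * e (k + N) := hk
        _ ≤ (1 - r) * ε / 2 + r * (ε / 2 + r ^ k * e N) := by gcongr
        _ = ε / 2 + r ^ (k + 1) * e N := by ring
  have hlim : Tendsto (fun k => ε / 2 + r ^ k * e N) atTop (𝓝 (ε / 2)) := by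
    simpa using ((tendsto_pow_atTop_nhds_zero_of_lt_one hr0 hr1).mul_const (e N)).const_add (ε / 2)
  rw [← map_add_atTop_eq_nat N]
  exact (hlim.eventually (gt_mem_nhds (by linarith))).mono fun k hk => (hbound k).trans_lt hk

theorem tendsto_div_natCast_of_tendsto_sub {a : ℕ → ℝ} {c : ℝ}
    (h : Tendsto (fun n => a (n + 1) - a n) atTop (𝓝 c)) :
    Tendsto (fun n => a n / n) atTop (𝓝 c) := by
  have hsum : Tendsto (fun n : ℕ => (n : ℝ)⁻¹ * (a n - a 0)) atTop (𝓝 c) := by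
    simpa only [Finset.sum_range_sub] using h.cesaro
  have hfirst : Tendsto (fun n : ℕ => (n : ℝ)⁻¹ * a 0) atTop (𝓝 0) := by
    simpa using tendsto_inv_atTop_nhds_zero_nat.mul_const (a 0)
  simpa using (hsum.add hfirst).congr fun n => by ring

theorem tendsto_rpow_one_div_of_tendsto_div {w : ℕ → ℝ} {l : ℝ} (hl : 0 < l)
    (hw : ∀ᶠ n in atTop, 0 < w n) (h : Tendsto (fun n => w (n + 1) / w n) atTop (𝓝 l)) :
    Tendsto (fun n : ℕ => w n ^ (1 / (n : ℝ))) atTop (𝓝 l) := by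
  have hlog : Tendsto (fun n => log (w n) / n) atTop (𝓝 (log l)) := by
    refine tendsto_div_natCast_of_tendsto_sub ((h.log hl.ne').congr' ?_)
    filter_upwards [hw, (tendsto_add_atTop_nat 1).eventually hw] with n h0 h1
    exact log_div h1.ne' h0.ne'
  have hexp := (continuous_exp.tendsto _).comp hlog
  rw [exp_log hl] at hexp
  refine hexp.congr' ?_
  filter_upwards [hw] with n hn
  rw [rpow_def_of_pos hn, Function.comp_apply, mul_one_div]

theorem tendsto_of_eq_add_div {x a b : ℕ → ℝ} {A B L : ℝ}
    (hx : ∀ᶠ n in atTop, 0 < x n) (hrec : ∀ᶠ n in atTop, x (n + 1) = a n + b n / x n)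
    (ha : Tendsto a atTop (𝓝 A)) (hb : Tendsto b atTop (𝓝 B))
    (hB : 0 < B) (hL : 0 < L) (hLA : L < 2 * A) (hfix : L ^ 2 = A * L + B) :
    Tendsto x atTop (𝓝 L) := by
  have hlower : ∀ᶠ n in atTop, L / 2 ≤ x (n + 1) := by
    filter_upwards [hx, hrec, ha.eventually (lt_mem_nhds (by linarith : L / 2 < A)),
      hb.eventually (lt_mem_nhds hB)] with n hxn hn han hbn
    rw [hn]
    linarith [div_pos hbn hxn]
  have hstep : ∀ᶠ n in atTop, |x (n + 2) - L| ≤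
      (|a (n + 1) - A| + |b (n + 1) - B| / (L / 2)) + 2 * B / L ^ 2 * |x (n + 1) - L| := by
    filter_upwards [hlower, (tendsto_add_atTop_nat 1).eventually hrec] with n hxn hn
    have hxpos : 0 < x (n + 1) := (half_pos hL).trans_le hxn
    have hid : x (n + 2) - L = (a (n + 1) - A) + (b (n + 1) - B) / x (n + 1)
        + B * (L - x (n + 1)) / (x (n + 1) * L) := by
      rw [hn]
      field_simp
      linear_combination (-x (n + 1)) * hfix
    have h1 : |(b (n + 1) - B) / x (n + 1)| ≤ |b (n + 1) - B| / (L / 2) := by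
      rw [abs_div, abs_of_pos hxpos]
      gcongr
    have h2 : |B * (L - x (n + 1)) / (x (n + 1) * L)| ≤ 2 * B / L ^ 2 * |x (n + 1) - L| := by
      rw [abs_div, abs_mul, abs_of_pos hB, abs_of_pos (mul_pos hxpos hL),
        abs_sub_comm, div_le_iff₀ (mul_pos hxpos hL)]
      have : 0 ≤ B * |x (n + 1) - L| := by positivity
      field_simp
      nlinarith
    rw [hid]
    exact (abs_add_three _ _ _).trans (by linarith)
  have hδ : Tendsto (fun n => |a (n + 1) - A| + |b (n + 1) - B| / (L / 2)) atTop (𝓝 0) := by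
    have ha' := ((ha.comp (tendsto_add_atTop_nat 1)).sub_const A).abs
    have hb' := (((hb.comp (tendsto_add_atTop_nat 1)).sub_const B).abs).div_const (L / 2)
    simpa using ha'.add hb'
  have hr : 2 * B / L ^ 2 < 1 := by
    rw [div_lt_one (by positivity)]
    nlinarith
  have herr := tendsto_zero_of_le_add_mul (e := fun n => |x (n + 1) - L|) (by positivity) hr
    (fun n => abs_nonneg _) hδ hstep
  rw [← tendsto_add_atTop_iff_nat 1, tendsto_iff_norm_sub_tendsto_zero]
  simpa using herr

def recA (n : ℕ) : ℚ := qq (n + 1) / ((2 * n + 3) ^ 2 * (2 * n + 4) ^ 2 * pp (n + 1))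

def recB (n : ℕ) : ℚ :=
  (2 * n + 1) ^ 2 * (2 * n + 2) ^ 2 * pp (n + 2) / ((2 * n + 3) ^ 2 * (2 * n + 4) ^ 2 * pp (n + 1))

lemma uSeq_add_two (n : ℕ) : uSeq (n + 2) = recA n * uSeq (n + 1) + recB n * uSeq n := by
  simp only [uSeq, recA, recB]
  ring

lemma vSeq_add_two (n : ℕ) : vSeq (n + 2) = recA n * vSeq (n + 1) + recB n * vSeq n := by
  simp only [vSeq, recA, recB]
  ring

lemma pp_pos (x : ℚ) : 0 < pp x := by
  unfold pp
  nlinarith [sq_nonneg (10 * x - 2)]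

lemma qq_pos {x : ℚ} (hx : 1 ≤ x) : 0 < qq x := by
  have h2 : x ^ 2 ≤ x ^ 6 := pow_le_pow_right₀ hx (by norm_num)
  have h3 : x ^ 3 ≤ x ^ 6 := pow_le_pow_right₀ hx (by norm_num)
  have h4 : 0 ≤ x ^ 4 := by positivity
  have h5 : 0 ≤ x ^ 5 := by positivity
  unfold qq
  nlinarith

lemma recA_pos (n : ℕ) : 0 < recA n :=
  div_pos (qq_pos (by simp)) (mul_pos (by positivity) (pp_pos _))

lemma recB_pos (n : ℕ) : 0 < recB n :=
  div_pos (mul_pos (by positivity) (pp_pos _)) (mul_pos (by positivity) (pp_pos _))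

lemma tendsto_recA : Tendsto recA atTop (𝓝 11) := by
  have hcont : ContinuousAt (fun t : ℚ =>
      (3520 * (1 + t) ^ 6 + 5632 * t * (1 + t) ^ 5 + 2064 * t ^ 2 * (1 + t) ^ 4
        - 384 * t ^ 3 * (1 + t) ^ 3 - 156 * t ^ 4 * (1 + t) ^ 2 + 16 * t ^ 5 * (1 + t) + 7 * t ^ 6)
      / ((2 + 3 * t) ^ 2 * (2 + 4 * t) ^ 2 * (20 * (1 + t) ^ 2 - 8 * t * (1 + t) + t ^ 2))) 0 := by
    fun_prop (disch := norm_num)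
  have h := hcont.tendsto.comp tendsto_one_div_atTop_nhds_zero_nat
  norm_num at h
  refine h.congr' ?_
  filter_upwards [eventually_ne_atTop 0] with n hn
  simp only [Function.comp, recA, qq, pp]
  field_simp

lemma tendsto_recB : Tendsto recB atTop (𝓝 1) := by
  have hcont : ContinuousAt (fun t : ℚ =>
      (2 + t) ^ 2 * (2 + 2 * t) ^ 2 * (20 * (1 + 2 * t) ^ 2 - 8 * t * (1 + 2 * t) + t ^ 2)
      / ((2 + 3 * t) ^ 2 * (2 + 4 * t) ^ 2 * (20 * (1 + t) ^ 2 - 8 * t * (1 + t) + t ^ 2))) 0 := by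
    fun_prop (disch := norm_num)
  have h := hcont.tendsto.comp tendsto_one_div_atTop_nhds_zero_nat
  norm_num at h
  refine h.congr' ?_
  filter_upwards [eventually_ne_atTop 0] with n hn
  simp only [Function.comp, recB, pp]
  field_simp

lemma goldenRatio_pow_five_sq : (goldenRatio ^ 5) ^ 2 = 11 * goldenRatio ^ 5 + 1 := by
  linear_combination (goldenRatio ^ 8 + goldenRatio ^ 7 + 2 * goldenRatio ^ 6 + 3 * goldenRatio ^ 5
    + 5 * goldenRatio ^ 4 - 3 * goldenRatio ^ 3 + 2 * goldenRatio ^ 2 - goldenRatio + 1)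
    * goldenRatio_sq

lemma goldenRatio_pow_five_lt : goldenRatio ^ 5 < 2 * 11 := by
  have h : goldenRatio ^ 5 = 5 * goldenRatio + 3 := by
    linear_combination (goldenRatio ^ 3 + goldenRatio ^ 2 + 2 * goldenRatio + 3) * goldenRatio_sq
  linarith [goldenRatio_lt_two]

theorem tendsto_rpow_one_div_of_add_two_eq {w : ℕ → ℝ}
    (hw : ∀ n, w (n + 2) = recA n * w (n + 1) + recB n * w n) (h0 : 0 ≤ w 0) (h1 : 0 < w 1) :
    Tendsto (fun n : ℕ => w n ^ (1 / (n : ℝ))) atTop (𝓝 (goldenRatio ^ 5)) := by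
  have hpos : ∀ n, 0 < w (n + 1) := pos_of_add_two_eq (fun n => by exact_mod_cast recA_pos n)
    (fun n => by exact_mod_cast (recB_pos n).le) hw h0 h1
  have hw_pos : ∀ᶠ n in atTop, 0 < w n := by
    filter_upwards [eventually_ge_atTop 1] with n hn
    obtain ⟨m, rfl⟩ := Nat.exists_eq_add_of_le' hn
    exact hpos m
  refine tendsto_rpow_one_div_of_tendsto_div (pow_pos goldenRatio_pos 5) hw_pos ?_
  refine tendsto_of_eq_add_div (a := fun n => (recA n : ℝ)) (b := fun n => (recB n : ℝ))
    (A := 11) (B := 1) ?_ ?_ ?_ ?_ one_pos (pow_pos goldenRatio_pos 5) goldenRatio_pow_five_lt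
    (by rw [goldenRatio_pow_five_sq])
  · filter_upwards [hw_pos] with n hn using div_pos (hpos n) hn
  · filter_upwards [hw_pos] with n hn
    change w (n + 2) / w (n + 1) = _
    have := (hpos n).ne'
    rw [hw n]
    field_simp
  · simpa [Function.comp_def] using (Rat.continuous_coe_real.tendsto _).comp tendsto_recA
  · simpa [Function.comp_def] using (Rat.continuous_coe_real.tendsto _).comp tendsto_recB

/-- `u_n^{1/n} → ((1+√5)/2)⁵` and `v_n^{1/n} → ((1+√5)/2)⁵`. -/
theorem catalan_sequences_growth :
    Tendsto (fun n : ℕ => ((uSeq n : ℝ)) ^ (1 / (n : ℝ))) atTop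
      (𝓝 (((1 + Real.sqrt 5) / 2) ^ 5)) ∧
    Tendsto (fun n : ℕ => ((vSeq n : ℝ)) ^ (1 / (n : ℝ))) atTop
      (𝓝 (((1 + Real.sqrt 5) / 2) ^ 5)) :=
  ⟨tendsto_rpow_one_div_of_add_two_eq (fun n => by exact_mod_cast uSeq_add_two n)
      (by norm_num [uSeq]) (by norm_num [uSeq]),
    tendsto_rpow_one_div_of_add_two_eq (fun n => by exact_mod_cast vSeq_add_two n)
      (by norm_num [vSeq]) (by norm_num [vSeq])⟩
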